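/- Let f : {0,1}^n → {0,1} be a total Boolean function with f⁻¹(0) and f⁻¹(1) both nonempty. Suppose f⁻¹(0) × f⁻¹(1) is partitioned into finitely many monochromatic rectangles R_1, …, R_m, where a rectangle X' × Y' with X' ⊆ f⁻¹(0), Y' ⊆ f⁻¹(1) is monochromatic if there exists an index z ∈ [n] such that x_z ≠ y_z for every (x,y) ∈ X' × Y'. Then m ≥ ADV±(f)². -/

import Mathlib

open scoped Matrix

/-- The spectral norm of a complex matrix. -/
noncomputable def specNorm {p q : Type*} [Fintype p] [Fintype q] [DecidableEq q]
    (A : Matrix p q ℂ) : ℝ :=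
  ‖LinearMap.toContinuousLinearMap (Matrix.toEuclideanLin A)‖

/-- The zero-one matrix `D_i` with `D_i[x,y] = 1` iff `x_i ≠ y_i`. -/
def Dmat {I : Type*} (i : I) : Matrix (I → Bool) (I → Bool) ℂ :=
  Matrix.of fun x y => if x i ≠ y i then 1 else 0

/-- The negative-weight adversary bound `ADV±(f)`: the supremum over all nonzero
adversary matrices `Γ` (Hermitian, vanishing on pairs with equal function value)
of `‖Γ‖ / max_i ‖Γ ∘ D_i‖`. -/
noncomputable def ADVpm {I : Type*} [Fintype I] [DecidableEq I]
    (f : (I → Bool) → Bool) : ℝ :=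
  sSup { r : ℝ | ∃ Γ : Matrix (I → Bool) (I → Bool) ℂ, Γ.IsHermitian ∧
    (∀ x y, f x = f y → Γ x y = 0) ∧ Γ ≠ 0 ∧
    r = specNorm Γ / ⨆ i : I, specNorm (Γ ⊙ Dmat i) }

section SpecAPI
variable {p q : Type*} [Fintype p] [Fintype q] [DecidableEq q]

lemma specNorm_nonneg (A : Matrix p q ℂ) : 0 ≤ specNorm A := norm_nonneg _

lemma mulVec_norm_le (A : Matrix p q ℂ) (v : q → ℂ) :
    Real.sqrt (∑ x, ‖(A.mulVec v) x‖^2) ≤ specNorm A * Real.sqrt (∑ y, ‖v y‖^2) := by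
  have h := (LinearMap.toContinuousLinearMap (Matrix.toEuclideanLin A)).le_opNorm
    ((WithLp.equiv 2 (q → ℂ)).symm v)
  simp only [LinearMap.coe_toContinuousLinearMap', WithLp.equiv_symm_apply, Matrix.toEuclideanLin_apply_piLp_toLp] at h
  rw [EuclideanSpace.norm_eq, EuclideanSpace.norm_eq] at h
  simpa [specNorm] using h

lemma entry_le_specNorm (A : Matrix p q ℂ) (x : p) (y : q) : ‖A x y‖ ≤ specNorm A := by
  have h := mulVec_norm_le A (Pi.single y 1)
  have h1 : ∑ y', ‖Pi.single (M := fun _ : q => ℂ) y 1 y'‖^2 = 1 := by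
    rw [Finset.sum_eq_single y] <;> simp +contextual [Pi.single_apply]
  rw [h1, Real.sqrt_one, mul_one] at h
  refine le_trans ?_ h
  have h2 : ‖(A.mulVec (Pi.single y 1)) x‖^2 ≤ ∑ x', ‖(A.mulVec (Pi.single y 1)) x'‖^2 :=
    Finset.single_le_sum (f := fun x' => ‖(A.mulVec (Pi.single y 1)) x'‖^2)
      (fun _ _ => by positivity) (Finset.mem_univ x)
  have h3 : (A.mulVec (Pi.single y 1)) x = A x y := by
    simp [Matrix.mulVec, dotProduct, Pi.single_apply]
  rw [← Real.sqrt_sq (norm_nonneg (A x y)), ← h3]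
  exact Real.sqrt_le_sqrt h2

lemma bilin_le_specNorm (A : Matrix p q ℂ) (u : p → ℂ) (v : q → ℂ) :
    ‖∑ x, ∑ y, (starRingEnd ℂ) (u x) * (A x y * v y)‖ ≤
      specNorm A * (Real.sqrt (∑ x, ‖u x‖^2) * Real.sqrt (∑ y, ‖v y‖^2)) := by
  have key : ∑ x, ∑ y, (starRingEnd ℂ) (u x) * (A x y * v y)
      = @inner ℂ _ _ ((WithLp.equiv 2 (p → ℂ)).symm u)
          ((WithLp.equiv 2 (p → ℂ)).symm (A.mulVec v)) := by
    rw [PiLp.inner_apply]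
    simp [Matrix.mulVec, dotProduct, Finset.mul_sum, RCLike.inner_apply]
    simp only [Finset.sum_mul]
    exact Finset.sum_congr rfl fun _ _ => Finset.sum_congr rfl fun _ _ => by ring
  rw [key]
  refine le_trans (norm_inner_le_norm _ _) ?_
  rw [EuclideanSpace.norm_eq, EuclideanSpace.norm_eq]
  have := mulVec_norm_le A v
  have hu : 0 ≤ Real.sqrt (∑ x, ‖u x‖^2) := Real.sqrt_nonneg _
  calc Real.sqrt (∑ x, ‖u x‖ ^ 2) * Real.sqrt (∑ x, ‖(A.mulVec v) x‖ ^ 2)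
      ≤ Real.sqrt (∑ x, ‖u x‖ ^ 2) * (specNorm A * Real.sqrt (∑ y, ‖v y‖^2)) := by
        exact mul_le_mul_of_nonneg_left this hu
    _ = specNorm A * (Real.sqrt (∑ x, ‖u x‖^2) * Real.sqrt (∑ y, ‖v y‖^2)) := by ring

lemma specNorm_le_of_bilin (A : Matrix p q ℂ) (C : ℝ) (hC : 0 ≤ C)
    (h : ∀ (u : p → ℂ) (v : q → ℂ), ‖∑ x, ∑ y, (starRingEnd ℂ) (u x) * (A x y * v y)‖ ≤
      C * (Real.sqrt (∑ x, ‖u x‖^2) * Real.sqrt (∑ y, ‖v y‖^2))) :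
    specNorm A ≤ C := by
  refine ContinuousLinearMap.opNorm_le_bound _ hC (fun w => ?_)
  obtain ⟨v, rfl⟩ : ∃ v : q → ℂ, (WithLp.equiv 2 (q → ℂ)).symm v = w :=
    ⟨WithLp.equiv 2 _ w, rfl⟩
  have hw : ‖(WithLp.equiv 2 (q → ℂ)).symm v‖ = Real.sqrt (∑ y, ‖v y‖^2) := by
    rw [EuclideanSpace.norm_eq]; simp
  have happ : ‖(LinearMap.toContinuousLinearMap (Matrix.toEuclideanLin A))
      ((WithLp.equiv 2 (q → ℂ)).symm v)‖ = Real.sqrt (∑ x, ‖(A.mulVec v) x‖^2) := by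
    simp only [LinearMap.coe_toContinuousLinearMap', WithLp.equiv_symm_apply, Matrix.toEuclideanLin_apply_piLp_toLp]
    rw [EuclideanSpace.norm_eq]
  rw [happ, hw]
  set s := Real.sqrt (∑ x, ‖(A.mulVec v) x‖^2) with hs
  clear_value s
  have hs0 : 0 ≤ s := hs ▸ Real.sqrt_nonneg _
  rcases eq_or_lt_of_le hs0 with h0 | h0
  · rw [← h0]; positivity
  have hb := h (A.mulVec v) v
  have heq : ∑ x, ∑ y, (starRingEnd ℂ) ((A.mulVec v) x) * (A x y * v y)
      = ((s^2 : ℝ) : ℂ) := by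
    have : ∀ x, ∑ y, (starRingEnd ℂ) ((A.mulVec v) x) * (A x y * v y)
        = ((‖(A.mulVec v) x‖^2 : ℝ) : ℂ) := by
      intro x
      rw [← Finset.mul_sum]
      have : ∑ y, A x y * v y = (A.mulVec v) x := by
        simp [Matrix.mulVec, dotProduct]
      rw [this, RCLike.conj_mul]
      norm_cast
    rw [Finset.sum_congr rfl (fun x _ => this x)]
    rw [hs, Real.sq_sqrt (by positivity)]
    norm_cast
  rw [heq] at hb
  have hnorm : ‖((s^2 : ℝ) : ℂ)‖ = s^2 := by
    rw [Complex.norm_real, Real.norm_eq_abs, abs_of_nonneg (by positivity)]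
  rw [hnorm, ← hs] at hb
  have : s * s ≤ (C * Real.sqrt (∑ y, ‖v y‖^2)) * s := by
    nlinarith [hb]
  exact le_of_mul_le_mul_right (by nlinarith [this]) h0

end SpecAPI

lemma expand_sum {γ : Type*} [Fintype γ] [DecidableEq γ] {M : Type*} [AddCommMonoid M]
    (s t : Finset γ) (h : γ → γ → M) :
    (∑ x ∈ s, ∑ y ∈ t, h x y) = ∑ x, ∑ y, if x ∈ s ∧ y ∈ t then h x y else 0 := by
  have inner : ∀ x, (∑ y, if x ∈ s ∧ y ∈ t then h x y else 0)
      = if x ∈ s then ∑ y ∈ t, h x y else 0 := by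
    intro x
    by_cases hx : x ∈ s
    · rw [if_pos hx]
      simp only [hx, true_and]
      rw [Finset.sum_ite_mem, Finset.univ_inter]
    · simp [hx]
  rw [Finset.sum_congr rfl fun x _ => inner x, Finset.sum_ite_mem, Finset.univ_inter]

lemma partition_sum {n m : ℕ} {M : Type*} [AddCommMonoid M]
    (f : (Fin n → Bool) → Bool)
    (R : Fin m → Finset (Fin n → Bool) × Finset (Fin n → Bool))
    (hsub0 : ∀ j, ∀ x ∈ (R j).1, f x = false)
    (hsub1 : ∀ j, ∀ y ∈ (R j).2, f y = true)
    (hpart : ∀ x y, f x = false → f y = true →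
      ∃! j : Fin m, x ∈ (R j).1 ∧ y ∈ (R j).2)
    (h : (Fin n → Bool) → (Fin n → Bool) → M) :
    ∑ j, ∑ x ∈ (R j).1, ∑ y ∈ (R j).2, h x y
      = ∑ x ∈ Finset.univ.filter (fun x => f x = false),
          ∑ y ∈ Finset.univ.filter (fun y => f y = true), h x y := by
  classical
  rw [Finset.sum_congr rfl fun j _ => expand_sum (R j).1 (R j).2 h, expand_sum]
  rw [Finset.sum_comm]
  refine Finset.sum_congr rfl fun x _ => ?_
  rw [Finset.sum_comm]
  refine Finset.sum_congr rfl fun y _ => ?_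
  by_cases hxy : f x = false ∧ f y = true
  · obtain ⟨j0, hj0, huniq⟩ := hpart x y hxy.1 hxy.2
    rw [Finset.sum_eq_single j0]
    · simp [hj0, hxy, Finset.mem_filter]
    · intro j _ hjne
      rw [if_neg]
      exact fun hmem => hjne (huniq j hmem)
    · intro habs; exact absurd (Finset.mem_univ j0) habs
  · rw [Finset.sum_eq_zero, if_neg]
    · simp only [Finset.mem_filter, Finset.mem_univ, true_and]
      exact fun ⟨ha, hb⟩ => hxy ⟨ha, hb⟩
    · intro j _
      rw [if_neg]
      exact fun ⟨ha, hb⟩ => hxy ⟨hsub0 j x ha, hsub1 j y hb⟩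

lemma sqrt_cs (A A' B B' : ℝ) (hA : 0 ≤ A) (hA' : 0 ≤ A') (hB : 0 ≤ B) (hB' : 0 ≤ B') :
    Real.sqrt A * Real.sqrt B + Real.sqrt A' * Real.sqrt B'
      ≤ Real.sqrt (A + A') * Real.sqrt (B + B') := by
  have hL : 0 ≤ Real.sqrt A * Real.sqrt B + Real.sqrt A' * Real.sqrt B' := by positivity
  have step : Real.sqrt A * Real.sqrt B + Real.sqrt A' * Real.sqrt B'
      ≤ Real.sqrt ((A + A') * (B + B')) := by
    rw [show Real.sqrt A * Real.sqrt B + Real.sqrt A' * Real.sqrt B'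
      = Real.sqrt ((Real.sqrt A * Real.sqrt B + Real.sqrt A' * Real.sqrt B')^2) from
        (Real.sqrt_sq hL).symm]
    apply Real.sqrt_le_sqrt
    have e1 : Real.sqrt A ^ 2 = A := Real.sq_sqrt hA
    have e2 : Real.sqrt A' ^ 2 = A' := Real.sq_sqrt hA'
    have e3 : Real.sqrt B ^ 2 = B := Real.sq_sqrt hB
    have e4 : Real.sqrt B' ^ 2 = B' := Real.sq_sqrt hB'
    nlinarith [sq_nonneg (Real.sqrt A * Real.sqrt B' - Real.sqrt A' * Real.sqrt B)]
  rw [← Real.sqrt_mul (by linarith : (0:ℝ) ≤ A + A') (B + B')]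
  exact step

theorem stmt4
    {n : ℕ} (f : (Fin n → Bool) → Bool)
    (h0 : ∃ x, f x = false) (h1 : ∃ y, f y = true)
    (m : ℕ) (R : Fin m → Finset (Fin n → Bool) × Finset (Fin n → Bool))
    (hsub0 : ∀ j, ∀ x ∈ (R j).1, f x = false)
    (hsub1 : ∀ j, ∀ y ∈ (R j).2, f y = true)
    (hmono : ∀ j, ∃ z : Fin n, ∀ x ∈ (R j).1, ∀ y ∈ (R j).2, x z ≠ y z)
    (hpart : ∀ x y, f x = false → f y = true →
      ∃! j : Fin m, x ∈ (R j).1 ∧ y ∈ (R j).2) :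
    ADVpm f ^ 2 ≤ (m : ℝ) := by
  classical
  choose z hz using hmono
  set F := Finset.univ.filter (fun x : Fin n → Bool => f x = false) with hF
  set T := Finset.univ.filter (fun x : Fin n → Bool => f x = true) with hT
  have hFT : Finset.univ.filter (fun x : Fin n → Bool => ¬ f x = false) = T := by
    ext x; simp only [Finset.mem_filter, Finset.mem_univ, true_and, hT]
    cases h : f x <;> simp
  have hTF : Finset.univ.filter (fun x : Fin n → Bool => ¬ f x = true) = F := by
    ext x; simp only [Finset.mem_filter, Finset.mem_univ, true_and, hF]
    cases h : f x <;> simp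
  have key : ∀ r ∈ { r : ℝ | ∃ Γ : Matrix (Fin n → Bool) (Fin n → Bool) ℂ, Γ.IsHermitian ∧
      (∀ x y, f x = f y → Γ x y = 0) ∧ Γ ≠ 0 ∧
      r = specNorm Γ / ⨆ i, specNorm (Γ ⊙ Dmat i) }, r ≤ Real.sqrt m := by
    rintro r ⟨Γ, hherm, hzero, hΓne, rfl⟩
    set c := ⨆ i, specNorm (Γ ⊙ Dmat i) with hc
    have hbdd : BddAbove (Set.range fun i => specNorm (Γ ⊙ Dmat i)) :=
      Set.Finite.bddAbove (Set.finite_range _)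
    have hle : ∀ i, specNorm (Γ ⊙ Dmat i) ≤ c := fun i => le_ciSup hbdd i
    -- c > 0
    have hcpos : 0 < c := by
      have hex : ∃ x y, Γ x y ≠ 0 := by
        by_contra hall
        push_neg at hall
        exact hΓne (Matrix.ext fun x y => hall x y)
      obtain ⟨x, y, hxy⟩ := hex
      have hxyne : x ≠ y := by
        intro h
        exact hxy (hzero x y (by rw [h]))
      obtain ⟨i, hi⟩ : ∃ i, x i ≠ y i := Function.ne_iff.mp hxyne
      have hent : (Γ ⊙ Dmat i) x y = Γ x y := by
        simp [Matrix.hadamard_apply, Dmat, hi]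
      have := entry_le_specNorm (Γ ⊙ Dmat i) x y
      rw [hent] at this
      have h1' : 0 < ‖Γ x y‖ := norm_pos_iff.2 hxy
      exact lt_of_lt_of_le h1' (le_trans this (hle i))
    -- main bound
    have main : specNorm Γ ≤ Real.sqrt m * c := by
      apply specNorm_le_of_bilin _ _ (mul_nonneg (Real.sqrt_nonneg _) hcpos.le)
      intro u v
      suffices H : ∀ g : (Fin n → Bool) → (Fin n → Bool) → ℂ,
          g = (fun x y => (starRingEnd ℂ) (u x) * (Γ x y * v y)) →
          ‖∑ x, ∑ y, g x y‖ ≤ Real.sqrt m * c *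
            (Real.sqrt (∑ x, ‖u x‖^2) * Real.sqrt (∑ y, ‖v y‖^2)) by
        exact H _ rfl
      intro g hg
      -- split the sum
      have split : ∑ x, ∑ y, g x y
          = (∑ x ∈ F, ∑ y ∈ T, g x y) + (∑ x ∈ T, ∑ y ∈ F, g x y) := by
        rw [← Finset.sum_filter_add_sum_filter_not Finset.univ
          (fun x => f x = false) (fun x => ∑ y, g x y), hFT]
        congr 1
        · refine Finset.sum_congr rfl fun x hx => ?_
          have hfx : f x = false := (Finset.mem_filter.mp hx).2
          rw [← Finset.sum_filter_add_sum_filter_not Finset.univ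
            (fun y => f y = true) (fun y => g x y), hTF]
          have hzero2 : ∑ y ∈ F, g x y = 0 := by
            refine Finset.sum_eq_zero fun y hy => ?_
            have hfy : f y = false := (Finset.mem_filter.mp hy).2
            simp [hg, hzero x y (hfx.trans hfy.symm)]
          rw [hzero2, add_zero]
        · refine Finset.sum_congr rfl fun x hx => ?_
          have hfx : f x = true := (Finset.mem_filter.mp hx).2
          rw [← Finset.sum_filter_add_sum_filter_not Finset.univ
            (fun y => f y = false) (fun y => g x y), hFT]
          have hzero2 : ∑ y ∈ T, g x y = 0 := by
            refine Finset.sum_eq_zero fun y hy => ?_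
            have hfy : f y = true := (Finset.mem_filter.mp hy).2
            simp [hg, hzero x y (hfx.trans hfy.symm)]
          rw [hzero2, add_zero]
      -- rectangle decomposition
      have step2a : ∑ x ∈ F, ∑ y ∈ T, g x y
          = ∑ j, ∑ x ∈ (R j).1, ∑ y ∈ (R j).2, g x y :=
        (partition_sum f R hsub0 hsub1 hpart g).symm
      have step2b : ∑ x ∈ T, ∑ y ∈ F, g x y
          = ∑ j, ∑ x ∈ (R j).2, ∑ y ∈ (R j).1, g x y := by
        have hps := partition_sum f R hsub0 hsub1 hpart (fun a b => g b a)
        rw [Finset.sum_comm, ← hps]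
        exact Finset.sum_congr rfl fun j _ => Finset.sum_comm
      set a : Fin m → ℝ := fun j => Real.sqrt (∑ x ∈ (R j).1, ‖u x‖^2) with ha
      set b : Fin m → ℝ := fun j => Real.sqrt (∑ y ∈ (R j).2, ‖v y‖^2) with hb
      set al : Fin m → ℝ := fun j => Real.sqrt (∑ x ∈ (R j).2, ‖u x‖^2) with hal
      set be : Fin m → ℝ := fun j => Real.sqrt (∑ y ∈ (R j).1, ‖v y‖^2) with hbe
      -- per-rectangle bounds
      have hrect : ∀ (s t : Finset (Fin n → Bool)) (j : Fin m),
          (∀ x ∈ s, ∀ y ∈ t, x (z j) ≠ y (z j)) →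
          ‖∑ x ∈ s, ∑ y ∈ t, g x y‖ ≤ c *
            (Real.sqrt (∑ x ∈ s, ‖u x‖^2) * Real.sqrt (∑ y ∈ t, ‖v y‖^2)) := by
        intro s t j hne
        set B := Γ ⊙ Dmat (z j) with hB
        set u' : (Fin n → Bool) → ℂ := fun x => if x ∈ s then u x else 0 with hu'
        set v' : (Fin n → Bool) → ℂ := fun y => if y ∈ t then v y else 0 with hv'
        have heq : ∑ x ∈ s, ∑ y ∈ t, g x y
            = ∑ x, ∑ y, (starRingEnd ℂ) (u' x) * (B x y * v' y) := by
          rw [expand_sum]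
          refine Finset.sum_congr rfl fun x _ => Finset.sum_congr rfl fun y _ => ?_
          by_cases hx : x ∈ s <;> by_cases hy : y ∈ t
          · have hzz := hne x hx y hy
            simp [hx, hy, hu', hv', hg, hB, Matrix.hadamard_apply, Dmat, hzz]
          · simp [hx, hy, hu', hv']
          · simp [hx, hy, hu', hv']
          · simp [hx, hy, hu', hv']
        have hun : ∑ x, ‖u' x‖^2 = ∑ x ∈ s, ‖u x‖^2 := by
          rw [Finset.sum_congr rfl (fun x _ => show ‖u' x‖^2 = if x ∈ s then ‖u x‖^2 else 0 by
            by_cases hx : x ∈ s <;> simp [hu', hx]), Finset.sum_ite_mem, Finset.univ_inter]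
        have hvn : ∑ y, ‖v' y‖^2 = ∑ y ∈ t, ‖v y‖^2 := by
          rw [Finset.sum_congr rfl (fun y _ => show ‖v' y‖^2 = if y ∈ t then ‖v y‖^2 else 0 by
            by_cases hy : y ∈ t <;> simp [hv', hy]), Finset.sum_ite_mem, Finset.univ_inter]
        rw [heq]
        refine le_trans (bilin_le_specNorm B u' v') ?_
        rw [hun, hvn]
        exact mul_le_mul_of_nonneg_right (hle (z j)) (by positivity)
      have hT1 : ∀ j, ‖∑ x ∈ (R j).1, ∑ y ∈ (R j).2, g x y‖ ≤ c * (a j * b j) :=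
        fun j => hrect (R j).1 (R j).2 j (fun x hx y hy => hz j x hx y hy)
      have hT2 : ∀ j, ‖∑ x ∈ (R j).2, ∑ y ∈ (R j).1, g x y‖ ≤ c * (al j * be j) :=
        fun j => hrect (R j).2 (R j).1 j (fun x hx y hy => (hz j y hy x hx).symm)
      -- Cauchy-Schwarz over rectangles
      set A1 : ℝ := ∑ x ∈ F, ‖u x‖^2 with hA1
      set B1 : ℝ := ∑ y ∈ T, ‖v y‖^2 with hB1
      set A2 : ℝ := ∑ x ∈ T, ‖u x‖^2 with hA2
      set B2 : ℝ := ∑ y ∈ F, ‖v y‖^2 with hB2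
      have hA1n : 0 ≤ A1 := by rw [hA1]; exact Finset.sum_nonneg fun x _ => sq_nonneg _
      have hA2n : 0 ≤ A2 := by rw [hA2]; exact Finset.sum_nonneg fun x _ => sq_nonneg _
      have hB1n : 0 ≤ B1 := by rw [hB1]; exact Finset.sum_nonneg fun x _ => sq_nonneg _
      have hB2n : 0 ≤ B2 := by rw [hB2]; exact Finset.sum_nonneg fun x _ => sq_nonneg _
      have hCS : ∀ (p q : Fin m → ℝ), (∀ j, 0 ≤ p j) → (∀ j, 0 ≤ q j) →
          ∑ j, p j * q j ≤ Real.sqrt m * Real.sqrt (∑ j, (p j * q j)^2) := by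
        intro p q hp hq
        have h1 := Finset.sum_mul_sq_le_sq_mul_sq Finset.univ (fun _ => (1:ℝ))
          (fun j => p j * q j)
        simp only [one_mul, one_pow] at h1
        have h2 : (∑ _j : Fin m, (1:ℝ)) = (m : ℝ) := by simp
        rw [h2] at h1
        have h3 : 0 ≤ ∑ j, p j * q j :=
          Finset.sum_nonneg fun j _ => mul_nonneg (hp j) (hq j)
        calc ∑ j, p j * q j = Real.sqrt ((∑ j, p j * q j)^2) := (Real.sqrt_sq h3).symm
          _ ≤ Real.sqrt ((m : ℝ) * ∑ j, (p j * q j)^2) := Real.sqrt_le_sqrt h1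
          _ = Real.sqrt m * Real.sqrt (∑ j, (p j * q j)^2) :=
              Real.sqrt_mul (Nat.cast_nonneg m) _
      have hab : ∑ j, (a j * b j)^2 = A1 * B1 := by
        have := partition_sum f R hsub0 hsub1 hpart (fun x y => ‖u x‖^2 * ‖v y‖^2)
        calc ∑ j, (a j * b j)^2
            = ∑ j, ∑ x ∈ (R j).1, ∑ y ∈ (R j).2, ‖u x‖^2 * ‖v y‖^2 := by
              refine Finset.sum_congr rfl fun j _ => ?_
              rw [mul_pow, ha, hb, Real.sq_sqrt (by positivity), Real.sq_sqrt (by positivity),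
                Finset.sum_mul_sum]
          _ = ∑ x ∈ F, ∑ y ∈ T, ‖u x‖^2 * ‖v y‖^2 := this
          _ = A1 * B1 := by rw [hA1, hB1, Finset.sum_mul_sum]
      have habl : ∑ j, (al j * be j)^2 = A2 * B2 := by
        have hps := partition_sum f R hsub0 hsub1 hpart (fun x y => ‖u y‖^2 * ‖v x‖^2)
        calc ∑ j, (al j * be j)^2
            = ∑ j, ∑ x ∈ (R j).1, ∑ y ∈ (R j).2, ‖u y‖^2 * ‖v x‖^2 := by
              refine Finset.sum_congr rfl fun j _ => ?_
              rw [mul_pow, hal, hbe, Real.sq_sqrt (by positivity), Real.sq_sqrt (by positivity)]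
              rw [Finset.sum_mul_sum]
              rw [Finset.sum_comm]
          _ = ∑ x ∈ F, ∑ y ∈ T, ‖u y‖^2 * ‖v x‖^2 := hps
          _ = A2 * B2 := by
              rw [hA2, hB2, Finset.sum_mul_sum, Finset.sum_comm]
      have hS1 : ∑ j, a j * b j ≤ Real.sqrt m * (Real.sqrt A1 * Real.sqrt B1) := by
        refine le_trans (hCS a b (fun j => Real.sqrt_nonneg _) (fun j => Real.sqrt_nonneg _)) ?_
        rw [hab, Real.sqrt_mul hA1n]
      have hS2 : ∑ j, al j * be j ≤ Real.sqrt m * (Real.sqrt A2 * Real.sqrt B2) := by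
        refine le_trans (hCS al be (fun j => Real.sqrt_nonneg _) (fun j => Real.sqrt_nonneg _)) ?_
        rw [habl, Real.sqrt_mul hA2n]
      have hsum_u : A1 + A2 = ∑ x, ‖u x‖^2 := by
        rw [hA1, hA2, ← hFT]
        exact Finset.sum_filter_add_sum_filter_not Finset.univ _ _
      have hsum_v : B2 + B1 = ∑ y, ‖v y‖^2 := by
        rw [hB1, hB2, ← hFT]
        exact Finset.sum_filter_add_sum_filter_not Finset.univ _ _
      have hfinal : Real.sqrt A1 * Real.sqrt B1 + Real.sqrt A2 * Real.sqrt B2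
          ≤ Real.sqrt (∑ x, ‖u x‖^2) * Real.sqrt (∑ y, ‖v y‖^2) := by
        have := sqrt_cs A1 A2 B1 B2 hA1n hA2n hB1n hB2n
        rw [hsum_u] at this
        refine le_trans this ?_
        rw [show B1 + B2 = B2 + B1 from add_comm _ _, hsum_v]
      -- assemble
      calc ‖∑ x, ∑ y, g x y‖
          = ‖(∑ x ∈ F, ∑ y ∈ T, g x y) + (∑ x ∈ T, ∑ y ∈ F, g x y)‖ := by
            rw [split]
        _ ≤ ‖∑ x ∈ F, ∑ y ∈ T, g x y‖ + ‖∑ x ∈ T, ∑ y ∈ F, g x y‖ := norm_add_le _ _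
        _ ≤ (∑ j, c * (a j * b j)) + (∑ j, c * (al j * be j)) := by
            refine add_le_add ?_ ?_
            · rw [step2a]
              exact le_trans (norm_sum_le _ _) (Finset.sum_le_sum fun j _ => hT1 j)
            · rw [step2b]
              exact le_trans (norm_sum_le _ _) (Finset.sum_le_sum fun j _ => hT2 j)
        _ = c * ((∑ j, a j * b j) + (∑ j, al j * be j)) := by
            rw [← Finset.mul_sum, ← Finset.mul_sum, mul_add]
        _ ≤ c * (Real.sqrt m * (Real.sqrt A1 * Real.sqrt B1)
              + Real.sqrt m * (Real.sqrt A2 * Real.sqrt B2)) := by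
            exact mul_le_mul_of_nonneg_left (add_le_add hS1 hS2) hcpos.le
        _ = (Real.sqrt m * c) * (Real.sqrt A1 * Real.sqrt B1
              + Real.sqrt A2 * Real.sqrt B2) := by ring
        _ ≤ (Real.sqrt m * c) * (Real.sqrt (∑ x, ‖u x‖^2) * Real.sqrt (∑ y, ‖v y‖^2)) := by
            exact mul_le_mul_of_nonneg_left hfinal
              (mul_nonneg (Real.sqrt_nonneg _) hcpos.le)
    rw [div_le_iff₀ hcpos]
    exact main
  have hD : ADVpm f ≤ Real.sqrt m := Real.sSup_le key (Real.sqrt_nonneg _)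
  have hE : 0 ≤ ADVpm f := by
    apply Real.sSup_nonneg
    rintro r ⟨Γ, _, _, _, rfl⟩
    exact div_nonneg (norm_nonneg _) (Real.iSup_nonneg fun i => specNorm_nonneg _)
  calc ADVpm f ^ 2 ≤ Real.sqrt m ^ 2 := pow_le_pow_left₀ hE hD 2
    _ = m := Real.sq_sqrt (Nat.cast_nonneg m)
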